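/- Let d ≥ 2, ε ∈ (0,1], and let A be a symmetric d×d real matrix with tr A > 0 satisfying the Cordes condition |A|²/(tr A)² ≤ 1/(d-1+ε). Set γ = tr(A)/|A|². Then for every d×d real matrix B one has |γ (A:B) − tr(B)| ≤ √(1−ε) |B|, where A:B = Σᵢⱼ aᵢⱼbᵢⱼ and |B| is the Frobenius norm of B. -/

import Mathlib

/-!
Since `γ (A : B) - tr B = (γ A - I) : B`, Cauchy–Schwarz bounds the left side by `|γ A - I| |B|`.
The choice `γ = tr A / |A|²` minimises `|γ A - I|² = γ² |A|² - 2 γ tr A + d`, with minimum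
`d - (tr A)² / |A|²`, and the Cordes condition says exactly that this is at most `1 - ε`.
-/

namespace Matrix

variable {m n : Type*} [Fintype m] [Fintype n]

theorem sq_sum_sum_mul_le (M B : Matrix m n ℝ) :
    (∑ i, ∑ j, M i j * B i j) ^ 2 ≤ (∑ i, ∑ j, M i j ^ 2) * ∑ i, ∑ j, B i j ^ 2 := by
  simpa only [Fintype.sum_prod_type] using
    Finset.sum_mul_sq_le_sq_mul_sq Finset.univ (fun p : m × n => M p.1 p.2) (fun p => B p.1 p.2)

theorem sum_sum_sq_pos_of_trace_ne_zero {A : Matrix n n ℝ} (h : trace A ≠ 0) :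
    0 < ∑ i, ∑ j, A i j ^ 2 := by
  obtain ⟨i, -, hi⟩ := Finset.exists_ne_zero_of_sum_ne_zero h
  calc 0 < A i i ^ 2 := sq_pos_of_ne_zero hi
    _ ≤ ∑ j, A i j ^ 2 :=
      Finset.single_le_sum (fun j _ => sq_nonneg (A i j)) (Finset.mem_univ i)
    _ ≤ ∑ i, ∑ j, A i j ^ 2 :=
      Finset.single_le_sum (fun i _ => Finset.sum_nonneg fun j _ => sq_nonneg (A i j))
        (Finset.mem_univ i)

variable [DecidableEq n]

theorem mul_sum_sum_mul_sub_trace (c : ℝ) (A B : Matrix n n ℝ) :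
    c * (∑ i, ∑ j, A i j * B i j) - trace B = ∑ i, ∑ j, (c • A - 1) i j * B i j := by
  simp only [sub_apply, smul_apply, one_apply, smul_eq_mul, sub_mul, ite_mul, one_mul, zero_mul,
    Finset.sum_sub_distrib, Finset.sum_ite_eq, Finset.mem_univ, if_true, Finset.mul_sum,
    mul_assoc, trace, diag]

theorem sum_sum_sq_smul_sub_one (c : ℝ) (A : Matrix n n ℝ) :
    ∑ i, ∑ j, (c • A - 1) i j ^ 2 =
      c ^ 2 * ∑ i, ∑ j, A i j ^ 2 - 2 * c * trace A + Fintype.card n := by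
  have hexpand : ∀ i j, (c • A - 1) i j ^ 2 =
      c ^ 2 * A i j ^ 2 - 2 * c * (if i = j then A i j else 0) + (if i = j then 1 else 0) := by
    intro i j
    by_cases h : i = j <;> simp [h] <;> ring
  simp only [hexpand, Finset.sum_add_distrib, Finset.sum_sub_distrib, ← Finset.mul_sum,
    Finset.sum_ite_eq, Finset.mem_univ, if_true, trace, diag, Finset.sum_const,
    Finset.card_univ, nsmul_eq_mul, mul_one]

theorem sum_sum_sq_trace_div_smul_sub_one {A : Matrix n n ℝ} (hA : ∑ i, ∑ j, A i j ^ 2 ≠ 0) :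
    ∑ i, ∑ j, ((trace A / ∑ i, ∑ j, A i j ^ 2) • A - 1) i j ^ 2 =
      Fintype.card n - trace A ^ 2 / ∑ i, ∑ j, A i j ^ 2 := by
  rw [sum_sum_sq_smul_sub_one]
  field_simp
  ring

theorem abs_mul_sum_sum_mul_sub_trace_le (c : ℝ) (A B : Matrix n n ℝ) :
    |c * (∑ i, ∑ j, A i j * B i j) - trace B| ≤
      √(∑ i, ∑ j, (c • A - 1) i j ^ 2) * √(∑ i, ∑ j, B i j ^ 2) := by
  rw [mul_sum_sum_mul_sub_trace]
  exact (Real.abs_le_sqrt (sq_sum_sum_mul_le _ _)).trans_eq <| Real.sqrt_mul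
    (Finset.sum_nonneg fun i _ => Finset.sum_nonneg fun j _ => sq_nonneg _) _

end Matrix

theorem cordes_gamma_estimate_general (d : ℕ) (ε : ℝ)
    (A : Matrix (Fin d) (Fin d) ℝ)
    (htr : 0 < Matrix.trace A)
    (hcordes : (∑ i, ∑ j, A i j ^ 2) / (Matrix.trace A) ^ 2 ≤ 1 / ((d : ℝ) - 1 + ε))
    (γ : ℝ) (hγ : γ = Matrix.trace A / (∑ i, ∑ j, A i j ^ 2))
    (B : Matrix (Fin d) (Fin d) ℝ) :
    |γ * (∑ i, ∑ j, A i j * B i j) - Matrix.trace B| ≤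
      Real.sqrt (1 - ε) * Real.sqrt (∑ i, ∑ j, B i j ^ 2) := by
  have hA : 0 < ∑ i, ∑ j, A i j ^ 2 := Matrix.sum_sum_sq_pos_of_trace_ne_zero htr.ne'
  have hratio : 0 < (∑ i, ∑ j, A i j ^ 2) / Matrix.trace A ^ 2 := div_pos hA (pow_pos htr 2)
  have hdε : 0 < (d : ℝ) - 1 + ε := one_div_pos.mp (hratio.trans_le hcordes)
  have hcordes' : (d : ℝ) - 1 + ε ≤ Matrix.trace A ^ 2 / ∑ i, ∑ j, A i j ^ 2 := by
    rw [div_le_div_iff₀ (pow_pos htr 2) hdε, one_mul] at hcordes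
    rwa [le_div_iff₀ hA, mul_comm]
  have hdist : ∑ i, ∑ j, (γ • A - 1) i j ^ 2 ≤ 1 - ε := by
    rw [hγ, Matrix.sum_sum_sq_trace_div_smul_sub_one hA.ne', Fintype.card_fin]
    linarith
  calc _ ≤ √(∑ i, ∑ j, (γ • A - 1) i j ^ 2) * √(∑ i, ∑ j, B i j ^ 2) :=
        Matrix.abs_mul_sum_sum_mul_sub_trace_le γ A B
    _ ≤ √(1 - ε) * √(∑ i, ∑ j, B i j ^ 2) := by gcongr

theorem cordes_gamma_estimate (d : ℕ) (hd : 2 ≤ d) (ε : ℝ) (hε0 : 0 < ε) (hε1 : ε ≤ 1)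
    (A : Matrix (Fin d) (Fin d) ℝ) (hsymm : A.IsSymm)
    (htr : 0 < Matrix.trace A)
    (hcordes : (∑ i, ∑ j, A i j ^ 2) / (Matrix.trace A) ^ 2 ≤ 1 / ((d : ℝ) - 1 + ε))
    (γ : ℝ) (hγ : γ = Matrix.trace A / (∑ i, ∑ j, A i j ^ 2))
    (B : Matrix (Fin d) (Fin d) ℝ) :
    |γ * (∑ i, ∑ j, A i j * B i j) - Matrix.trace B| ≤
      Real.sqrt (1 - ε) * Real.sqrt (∑ i, ∑ j, B i j ^ 2) :=
  cordes_gamma_estimate_general d ε A htr hcordes γ hγ B
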